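/- arXiv:1504.00618 — 4 statements merged into one kernel-verified Lean document; each statement's English description precedes it below -/
import Mathlib

section
/- For every γ ∈ (0, 1/2) there exists a finite constant C' > 0 such that for every integer n ≥ 1, the iterated integral ∫₀¹ du₀ ∫₀¹ du₁ ⋯ ∫₀¹ duₙ ∏_{k=1}^n 1/((u_{k-1} ∧ u_k)^γ · (u_{k-1} ∨ u_k)^{1-γ}) is at most C'^n. -/
open MeasureTheory Set Function
open scoped ENNReal

/-!
A Schur test with the weight `v ^ (-1/2)`. The kernel `1 / (min u v ^ γ * max u v ^ (1 - γ))`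
is homogeneous of degree `-1`, so `∫₀^∞ K(u, v) v^(-1/2) dv = (2 / (1/2 - γ)) u^(-1/2)`, both
halves `v < u` and `v > u` converging exactly because `γ < 1/2`. Inserting the weight, which is
`≥ 1` on `(0, 1]`, at the last variable and integrating out `uₙ, uₙ₋₁, …` one at a time bounds
the integral by `(2 / (1/2 - γ))ⁿ ∫₀¹ v^(-1/2) dv = 2 (2 / (1/2 - γ))ⁿ`.
-/

theorem lintegral_pi_prod_kernel_mul_le_pow {α : Type*} [MeasurableSpace α] (μ : Measure α) [SigmaFinite μ] {K : α → α → ℝ≥0∞}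
    {w : α → ℝ≥0∞} (hK : Measurable (uncurry K)) (hw : Measurable w) {c : ℝ≥0∞}
    (hKw : ∀ᵐ u ∂μ, ∫⁻ v, K u v * w v ∂μ ≤ c * w u) (n : ℕ) :
    ∫⁻ u, (∏ k : Fin n, K (u k.castSucc) (u k.succ)) * w (u (Fin.last n))
        ∂Measure.pi (fun _ : Fin (n + 1) => μ) ≤ c ^ n * ∫⁻ u, w u ∂μ := by
  induction n with
  | zero =>
    simp only [Finset.univ_eq_empty, Finset.prod_empty, one_mul, pow_zero]
    exact ((measurePreserving_piUnique fun _ : Fin 1 => μ).lintegral_comp hw).le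
  | succ n ih =>
    set e := MeasurableEquiv.piFinSuccAbove (fun _ : Fin (n + 2) => α) (Fin.last (n + 1))
    have he : ∀ x (y : Fin (n + 1) → α), e.symm (x, y) = Fin.snoc y x := fun x y => by
      simp [e, MeasurableEquiv.piFinSuccAbove, Fin.snocEquiv]
    have hmeas : ∀ m : ℕ, Measurable fun u : Fin (m + 1) → α =>
        (∏ k : Fin m, K (u k.castSucc) (u k.succ)) * w (u (Fin.last m)) := fun m => by
      have hKij : ∀ i j : Fin (m + 1), Measurable fun u : Fin (m + 1) → α => K (u i) (u j) :=
        fun i j => hK.comp (f := fun u : Fin (m + 1) → α => (u i, u j)) (by fun_prop)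
      fun_prop
    rw [← ((measurePreserving_piFinSuccAbove (fun _ => μ) (Fin.last (n + 1))).symm e).lintegral_comp
      (hmeas (n + 1)), lintegral_prod_symm]
    swap
    · exact ((hmeas (n + 1)).comp e.symm.measurable).aemeasurable
    have hsec : ∀ a, Measurable fun v => K a v * w v := fun a =>
      (hK.comp measurable_prodMk_left).mul hw
    have hlast : ∀ᵐ y ∂Measure.pi (fun _ : Fin (n + 1) => μ),
        ∫⁻ x, K (y (Fin.last n)) x * w x ∂μ ≤ c * w (y (Fin.last n)) :=
      (Measure.tendsto_eval_ae_ae (μ := fun _ => μ) (i := Fin.last n)).eventually hKw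
    calc _ ≤ ∫⁻ y, c * ((∏ k : Fin n, K (y k.castSucc) (y k.succ)) * w (y (Fin.last n)))
          ∂Measure.pi (fun _ : Fin (n + 1) => μ) := by
          refine lintegral_mono_ae (hlast.mono fun y hy => ?_)
          simp only [he, Fin.prod_univ_castSucc, Fin.snoc_last, Fin.succ_last,
            Fin.succ_castSucc, Fin.snoc_castSucc, mul_assoc]
          rw [lintegral_const_mul _ (hsec _)]
          calc _ ≤ (∏ k : Fin n, K (y k.castSucc) (y k.succ)) * (c * w (y (Fin.last n))) := by
                gcongr
            _ = _ := by ring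
      _ ≤ c ^ (n + 1) * ∫⁻ u, w u ∂μ := by
          rw [lintegral_const_mul _ (hmeas n), pow_succ', mul_assoc]
          gcongr

theorem lintegral_Ioc_ofReal_rpow {u r : ℝ} (hu : 0 < u) (hr : -1 < r) :
    ∫⁻ v in Ioc 0 u, ENNReal.ofReal (v ^ r) = ENNReal.ofReal (u ^ (r + 1) / (r + 1)) := by
  have hint : IntegrableOn (fun v : ℝ => v ^ r) (Ioc 0 u) :=
    (intervalIntegrable_iff_integrableOn_Ioc_of_le hu.le).mp
      (intervalIntegral.intervalIntegrable_rpow' hr)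
  rw [← ofReal_integral_eq_lintegral_ofReal hint
    (ae_restrict_of_forall_mem measurableSet_Ioc fun v hv => Real.rpow_nonneg hv.1.le r),
    ← intervalIntegral.integral_of_le hu.le, integral_rpow (Or.inl hr),
    Real.zero_rpow (by linarith), sub_zero]

theorem lintegral_Ioi_ofReal_rpow {u r : ℝ} (hu : 0 < u) (hr : r < -1) :
    ∫⁻ v in Ioi u, ENNReal.ofReal (v ^ r) = ENNReal.ofReal (-u ^ (r + 1) / (r + 1)) := by
  rw [← ofReal_integral_eq_lintegral_ofReal (integrableOn_Ioi_rpow_of_lt hr hu)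
    (ae_restrict_of_forall_mem measurableSet_Ioi fun v hv => Real.rpow_nonneg (hu.trans hv).le r),
    integral_Ioi_rpow_of_lt hr hu]

noncomputable def timeKernel (γ u v : ℝ) : ℝ≥0∞ :=
  ENNReal.ofReal (1 / (min u v ^ γ * max u v ^ (1 - γ)))

theorem timeKernel_comm (γ u v : ℝ) : timeKernel γ u v = timeKernel γ v u := by
  rw [timeKernel, timeKernel, min_comm, max_comm]

theorem timeKernel_of_le {γ u v : ℝ} (hv : 0 < v) (hvu : v ≤ u) :
    timeKernel γ u v = ENNReal.ofReal (u ^ (γ - 1) * v ^ (-γ)) := by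
  have hu := hv.trans_le hvu
  rw [timeKernel, min_eq_right hvu, max_eq_left hvu, one_div, mul_inv, Real.rpow_neg hv.le,
    ← Real.rpow_neg hu.le, neg_sub, mul_comm]

theorem measurable_uncurry_timeKernel (γ : ℝ) : Measurable (uncurry (timeKernel γ)) := by
  unfold timeKernel
  fun_prop

section Schur

variable {γ u : ℝ}

theorem lintegral_Ioc_timeKernel_mul_rpow (hγ : γ < 1 / 2) (hu : 0 < u) :
    ∫⁻ v in Ioc 0 u, timeKernel γ u v * ENNReal.ofReal (v ^ (-(1 / 2) : ℝ)) =
      ENNReal.ofReal (1 / 2 - γ)⁻¹ * ENNReal.ofReal (u ^ (-(1 / 2) : ℝ)) := by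
  have hsplit : ∀ v ∈ Ioc 0 u, timeKernel γ u v * ENNReal.ofReal (v ^ (-(1 / 2) : ℝ)) =
      ENNReal.ofReal (u ^ (γ - 1)) * ENNReal.ofReal (v ^ (-γ - 1 / 2)) := fun v ⟨hv, hvu⟩ => by
    rw [timeKernel_of_le hv hvu, ENNReal.ofReal_mul (by positivity), mul_assoc,
      ← ENNReal.ofReal_mul (by positivity), ← Real.rpow_add hv]
    ring_nf
  have hγ' : 0 < 1 / 2 - γ := by linarith
  rw [setLIntegral_congr_fun measurableSet_Ioc hsplit,
    lintegral_const_mul' _ _ ENNReal.ofReal_ne_top, lintegral_Ioc_ofReal_rpow hu (by linarith),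
    ← ENNReal.ofReal_mul (by positivity), ← ENNReal.ofReal_mul (inv_nonneg.2 hγ'.le)]
  congr 1
  rw [show -γ - 1 / 2 + 1 = 1 / 2 - γ by ring, mul_div_assoc', ← Real.rpow_add hu,
    div_eq_inv_mul]
  ring_nf

theorem lintegral_Ioi_timeKernel_mul_rpow (hγ : γ < 1 / 2) (hu : 0 < u) :
    ∫⁻ v in Ioi u, timeKernel γ u v * ENNReal.ofReal (v ^ (-(1 / 2) : ℝ)) =
      ENNReal.ofReal (1 / 2 - γ)⁻¹ * ENNReal.ofReal (u ^ (-(1 / 2) : ℝ)) := by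
  have hsplit : ∀ v ∈ Ioi u, timeKernel γ u v * ENNReal.ofReal (v ^ (-(1 / 2) : ℝ)) =
      ENNReal.ofReal (u ^ (-γ)) * ENNReal.ofReal (v ^ (γ - 3 / 2)) := fun v (huv : u < v) => by
    have hv := hu.trans huv
    rw [timeKernel_comm, timeKernel_of_le hu huv.le, mul_comm (v ^ _),
      ENNReal.ofReal_mul (by positivity), mul_assoc, ← ENNReal.ofReal_mul (by positivity),
      ← Real.rpow_add hv]
    ring_nf
  have hγ' : 0 < 1 / 2 - γ := by linarith
  rw [setLIntegral_congr_fun measurableSet_Ioi hsplit,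
    lintegral_const_mul' _ _ ENNReal.ofReal_ne_top, lintegral_Ioi_ofReal_rpow hu (by linarith),
    ← ENNReal.ofReal_mul (by positivity), ← ENNReal.ofReal_mul (inv_nonneg.2 hγ'.le)]
  congr 1
  rw [show γ - 3 / 2 + 1 = -(1 / 2 - γ) by ring, neg_div_neg_eq, mul_div_assoc',
    ← Real.rpow_add hu, div_eq_inv_mul]
  ring_nf

theorem lintegral_Ioi_zero_timeKernel_mul_rpow (hγ : γ < 1 / 2) (hu : 0 < u) :
    ∫⁻ v in Ioi 0, timeKernel γ u v * ENNReal.ofReal (v ^ (-(1 / 2) : ℝ)) =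
      ENNReal.ofReal (2 * (1 / 2 - γ)⁻¹) * ENNReal.ofReal (u ^ (-(1 / 2) : ℝ)) := by
  have hγ' : 0 < 1 / 2 - γ := by linarith
  rw [← Ioc_union_Ioi_eq_Ioi hu.le, lintegral_union measurableSet_Ioi Ioc_disjoint_Ioi_same,
    lintegral_Ioc_timeKernel_mul_rpow hγ hu, lintegral_Ioi_timeKernel_mul_rpow hγ hu, ← add_mul,
    ← ENNReal.ofReal_add (inv_nonneg.2 hγ'.le) (inv_nonneg.2 hγ'.le), two_mul]

theorem lintegral_pi_Ioc_prod_timeKernel_le (hγ : γ < 1 / 2) (n : ℕ) :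
    ∫⁻ u, ∏ k : Fin n, timeKernel γ (u k.castSucc) (u k.succ)
        ∂Measure.pi (fun _ : Fin (n + 1) => volume.restrict (Ioc (0 : ℝ) 1)) ≤
      ENNReal.ofReal (2 * (1 / 2 - γ)⁻¹) ^ n * ENNReal.ofReal 2 := by
  have hw : ∀ᵐ v ∂volume.restrict (Ioc (0 : ℝ) 1), 1 ≤ ENNReal.ofReal (v ^ (-(1 / 2) : ℝ)) :=
    (ae_restrict_mem measurableSet_Ioc).mono fun v hv => ENNReal.one_le_ofReal.2
      (Real.one_le_rpow_of_pos_of_le_one_of_nonpos hv.1 hv.2 (by norm_num))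
  have hSchur : ∀ᵐ u ∂volume.restrict (Ioc (0 : ℝ) 1),
      ∫⁻ v in Ioc 0 1, timeKernel γ u v * ENNReal.ofReal (v ^ (-(1 / 2) : ℝ)) ≤
        ENNReal.ofReal (2 * (1 / 2 - γ)⁻¹) * ENNReal.ofReal (u ^ (-(1 / 2) : ℝ)) :=
    (ae_restrict_mem measurableSet_Ioc).mono fun u hu =>
      (lintegral_Ioi_zero_timeKernel_mul_rpow hγ hu.1).symm ▸
        lintegral_mono_set Ioc_subset_Ioi_self
  calc _ ≤ ∫⁻ u, (∏ k : Fin n, timeKernel γ (u k.castSucc) (u k.succ)) *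
          ENNReal.ofReal (u (Fin.last n) ^ (-(1 / 2) : ℝ))
          ∂Measure.pi (fun _ => volume.restrict (Ioc (0 : ℝ) 1)) :=
        lintegral_mono_ae ((Measure.tendsto_eval_ae_ae (i := Fin.last n)).eventually hw |>.mono
          fun u hu => le_mul_of_one_le_right' hu)
    _ ≤ _ := lintegral_pi_prod_kernel_mul_le_pow _ (measurable_uncurry_timeKernel γ)
        (by fun_prop) hSchur n
    _ = _ := by
        rw [lintegral_Ioc_ofReal_rpow one_pos (by norm_num)]
        norm_num

end Schur

theorem stmt_0_general (γ : ℝ) (hγ : γ < 1/2) :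
    ∃ C' : ℝ, 0 < C' ∧ ∀ n : ℕ, 1 ≤ n →
      (∫⁻ u in Set.univ.pi (fun _ : Fin (n+1) => Set.Ioc (0:ℝ) 1),
        ∏ k : Fin n, ENNReal.ofReal
          (1 / ((min (u k.castSucc) (u k.succ)) ^ γ *
                (max (u k.castSucc) (u k.succ)) ^ (1-γ)))) ≤
      ENNReal.ofReal (C' ^ n) := by
  have hc : 0 < 2 * (1 / 2 - γ)⁻¹ := mul_pos two_pos (inv_pos.2 (by linarith))
  refine ⟨2 * (2 * (1 / 2 - γ)⁻¹), by positivity, fun n hn => ?_⟩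
  rw [volume_pi, Measure.restrict_pi_pi]
  refine (lintegral_pi_Ioc_prod_timeKernel_le hγ n).trans ?_
  rw [← ENNReal.ofReal_pow hc.le, ← ENNReal.ofReal_mul (by positivity)]
  gcongr
  calc _ ≤ (2 * (1 / 2 - γ)⁻¹) ^ n * 2 ^ n := by
        gcongr; exact le_self_pow₀ (by norm_num) (Nat.one_le_iff_ne_zero.mp hn)
    _ = _ := (mul_comm _ _).trans (mul_pow _ _ _).symm

/-- Lemma 6.2: if `γ < 1/2` the iterated time integral grows at most exponentially. -/
theorem stmt_0 (γ : ℝ) (hγ0 : 0 < γ) (hγ : γ < 1/2) :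
    ∃ C' : ℝ, 0 < C' ∧ ∀ n : ℕ, 1 ≤ n →
      (∫⁻ u in Set.univ.pi (fun _ : Fin (n+1) => Set.Ioc (0:ℝ) 1),
        ∏ k : Fin n, ENNReal.ofReal
          (1 / ((min (u k.castSucc) (u k.succ)) ^ γ *
                (max (u k.castSucc) (u k.succ)) ^ (1-γ)))) ≤
      ENNReal.ofReal (C' ^ n) :=
  stmt_0_general γ hγ
end

section
/- Let γ ∈ (0, 1/2) and let α be a real number with γ − 1 < α < −γ. Then for every v ∈ (0,1], ∫₀¹ u^α / ((u ∧ v)^γ · (u ∨ v)^{1-γ}) du ≤ C' · v^α, where C' = (1 + α − γ)^{-1} − (α + γ)^{-1}. -/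
open MeasureTheory Set

/-!
Split the kernel at `u = v`: below `v` it is `u ^ (α - γ) * v ^ (γ - 1)`, above `v` it is
`u ^ (α + γ - 1) * v ^ (-γ)`. Enlarging `(0, 1]` to `(0, ∞)`, the two power integrals are
explicit, `∫₀^v u ^ (α - γ) = v ^ (1 + α - γ) / (1 + α - γ)` (as `α - γ > -1`) and
`∫_v^∞ u ^ (α + γ - 1) = -v ^ (α + γ) / (α + γ)` (as `α + γ < 0`), and each contributes a
multiple of `v ^ α`.
-/

lemma lintegral_Ioc_zero_rpow {a v : ℝ} (ha : -1 < a) (hv : 0 ≤ v) :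
    ∫⁻ u in Ioc 0 v, ENNReal.ofReal (u ^ a) = ENNReal.ofReal (v ^ (a + 1) / (a + 1)) := by
  have hint : IntegrableOn (fun u : ℝ => u ^ a) (Ioc 0 v) :=
    (intervalIntegrable_iff_integrableOn_Ioc_of_le hv).mp
      (intervalIntegral.intervalIntegrable_rpow' ha)
  have hnonneg : 0 ≤ᵐ[volume.restrict (Ioc 0 v)] fun u : ℝ => u ^ a :=
    (ae_restrict_iff' measurableSet_Ioc).mpr
      (Filter.Eventually.of_forall fun u hu => Real.rpow_nonneg hu.1.le a)
  rw [← ofReal_integral_eq_lintegral_ofReal hint hnonneg, ← intervalIntegral.integral_of_le hv,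
    integral_rpow (Or.inl ha), Real.zero_rpow (by linarith), sub_zero]

lemma lintegral_Ioi_rpow {a c : ℝ} (ha : a < -1) (hc : 0 < c) :
    ∫⁻ u in Ioi c, ENNReal.ofReal (u ^ a) = ENNReal.ofReal (-c ^ (a + 1) / (a + 1)) := by
  have hnonneg : 0 ≤ᵐ[volume.restrict (Ioi c)] fun u : ℝ => u ^ a :=
    (ae_restrict_iff' measurableSet_Ioi).mpr
      (Filter.Eventually.of_forall fun u hu => Real.rpow_nonneg (hc.trans hu).le a)
  rw [← ofReal_integral_eq_lintegral_ofReal (integrableOn_Ioi_rpow_of_lt ha hc) hnonneg,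
    integral_Ioi_rpow_of_lt ha hc]

lemma lintegral_ofReal_rpow_mul_const (s : Set ℝ) (a : ℝ) {c : ℝ} (hc : 0 ≤ c) :
    ∫⁻ u in s, ENNReal.ofReal (u ^ a * c) =
      (∫⁻ u in s, ENNReal.ofReal (u ^ a)) * ENNReal.ofReal c := by
  simp_rw [ENNReal.ofReal_mul' hc]
  exact lintegral_mul_const _ (by fun_prop)

section Kernel

variable {α γ u v : ℝ}

lemma rpow_div_min_mul_max_of_le (hu : 0 < u) (huv : u ≤ v) :
    u ^ α / (min u v ^ γ * max u v ^ (1 - γ)) = u ^ (α - γ) * v ^ (γ - 1) := by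
  have hv : 0 < v := hu.trans_le huv
  rw [min_eq_left huv, max_eq_right huv, Real.rpow_sub hu, show γ - 1 = -(1 - γ) by ring,
    Real.rpow_neg hv.le, div_mul_eq_div_div, div_eq_mul_inv]

lemma rpow_div_min_mul_max_of_ge (hv : 0 < v) (hvu : v ≤ u) :
    u ^ α / (min u v ^ γ * max u v ^ (1 - γ)) = u ^ (α + γ - 1) * v ^ (-γ) := by
  have hu : 0 < u := hv.trans_le hvu
  rw [min_eq_right hvu, max_eq_left hvu, show α + γ - 1 = α - (1 - γ) by ring,
    Real.rpow_sub hu α (1 - γ), Real.rpow_neg hv.le, mul_comm (v ^ γ), div_mul_eq_div_div, div_eq_mul_inv]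

lemma lintegral_Ioc_rpow_div_min_mul_max (hv : 0 < v) (hαγ : γ - 1 < α) :
    ∫⁻ u in Ioc 0 v, ENNReal.ofReal (u ^ α / (min u v ^ γ * max u v ^ (1 - γ))) =
      ENNReal.ofReal (v ^ α / (1 + α - γ)) := by
  have hvγ : 0 ≤ v ^ (γ - 1) := Real.rpow_nonneg hv.le _
  rw [setLIntegral_congr_fun measurableSet_Ioc fun u hu => by
      rw [rpow_div_min_mul_max_of_le hu.1 hu.2],
    lintegral_ofReal_rpow_mul_const _ _ hvγ, lintegral_Ioc_zero_rpow (by linarith) hv.le,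
    ← ENNReal.ofReal_mul (div_nonneg (Real.rpow_nonneg hv.le _) (by linarith)),
    div_mul_eq_mul_div, ← Real.rpow_add hv]
  ring_nf

lemma lintegral_Ioi_rpow_div_min_mul_max (hv : 0 < v) (hαγ : α + γ < 0) :
    ∫⁻ u in Ioi v, ENNReal.ofReal (u ^ α / (min u v ^ γ * max u v ^ (1 - γ))) =
      ENNReal.ofReal (-v ^ α / (α + γ)) := by
  have hvγ : 0 ≤ v ^ (-γ) := Real.rpow_nonneg hv.le _
  rw [setLIntegral_congr_fun measurableSet_Ioi fun u hu => by
      rw [rpow_div_min_mul_max_of_ge hv (le_of_lt hu)],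
    lintegral_ofReal_rpow_mul_const _ _ hvγ, lintegral_Ioi_rpow (by linarith) hv,
    ← ENNReal.ofReal_mul (div_nonneg_of_nonpos (by simpa using Real.rpow_nonneg hv.le _)
      (by linarith)),
    div_mul_eq_mul_div, neg_mul, ← Real.rpow_add hv]
  ring_nf

end Kernel

theorem stmt_1_general (γ α : ℝ)
    (hα1 : γ - 1 < α) (hα2 : α < -γ) (v : ℝ) (hv : v ∈ Set.Ioc (0:ℝ) 1) :
    (∫⁻ u in Set.Ioc (0:ℝ) 1,
        ENNReal.ofReal (u ^ α / ((min u v) ^ γ * (max u v) ^ (1-γ)))) ≤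
      ENNReal.ofReal (((1 + α - γ)⁻¹ - (α + γ)⁻¹) * v ^ α) := by
  have hv0 : 0 < v := hv.1
  have hvα : 0 ≤ v ^ α := Real.rpow_nonneg hv0.le α
  calc (∫⁻ u in Ioc 0 1, ENNReal.ofReal (u ^ α / (min u v ^ γ * max u v ^ (1 - γ))))
      ≤ ∫⁻ u in Ioi 0, ENNReal.ofReal (u ^ α / (min u v ^ γ * max u v ^ (1 - γ))) :=
        lintegral_mono_set Ioc_subset_Ioi_self
    _ = ENNReal.ofReal (v ^ α / (1 + α - γ)) + ENNReal.ofReal (-v ^ α / (α + γ)) := by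
        rw [← Ioc_union_Ioi_eq_Ioi hv0.le, lintegral_union measurableSet_Ioi Ioc_disjoint_Ioi_same,
          lintegral_Ioc_rpow_div_min_mul_max hv0 hα1,
          lintegral_Ioi_rpow_div_min_mul_max hv0 (by linarith)]
    _ = ENNReal.ofReal (((1 + α - γ)⁻¹ - (α + γ)⁻¹) * v ^ α) := by
        rw [← ENNReal.ofReal_add (div_nonneg hvα (by linarith))
          (div_nonneg_of_nonpos (neg_nonpos.mpr hvα) (by linarith))]
        ring_nf

/-- Induction step in the proof of Lemma 6.2. -/
theorem stmt_1 (γ α : ℝ) (hγ0 : 0 < γ) (hγ : γ < 1/2)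
    (hα1 : γ - 1 < α) (hα2 : α < -γ) (v : ℝ) (hv : v ∈ Set.Ioc (0:ℝ) 1) :
    (∫⁻ u in Set.Ioc (0:ℝ) 1,
        ENNReal.ofReal (u ^ α / ((min u v) ^ γ * (max u v) ^ (1-γ)))) ≤
      ENNReal.ofReal (((1 + α - γ)⁻¹ - (α + γ)⁻¹) * v ^ α) :=
  stmt_1_general γ α hα1 hα2 v hv
end

section
/- For every γ ∈ (0, 1) there exists a finite constant C''' > 0 such that for every integer n ≥ 1, the iterated integral ∫₀¹ dt₀ ∫₀¹ dt₁ ⋯ ∫₀¹ dtₙ ∏_{k=1}^n ( 𝟙{t_k < t_{k-1}} / (t_{k-1}^{1-γ} t_k^γ) + 𝟙{t_k > t_{k-1}} / t_k ) is at most C'''^n. -/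
/-!
The function `x ↦ x ^ (-α)`, `0 < α < 1 - γ`, is a supersolution of the kernel
`K(s, x) = 𝟙{x < s} / (s ^ (1 - γ) x ^ γ) + 𝟙{s < x} / x`: by scale invariance,
`∫₀^∞ K(s, x) x ^ (-α) dx = (1 / (1 - γ - α) + 1 / α) s ^ (-α)`. Since `x ^ (-α) ≥ 1` on `(0, 1]`,
it may be inserted at the last time `tₙ`, and integrating out `tₙ, tₙ₋₁, …, t₁` in turn costs one
factor `1 / (1 - γ - α) + 1 / α` each, leaving `∫₀¹ x ^ (-α) dx = 1 / (1 - α)`.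
-/

open MeasureTheory Set Function
open scoped ENNReal

theorem lintegral_Ioo_zero_rpow {s r : ℝ} (hs : 0 < s) (hr : -1 < r) :
    ∫⁻ x in Ioo 0 s, ENNReal.ofReal (x ^ r) = ENNReal.ofReal (s ^ (r + 1) / (r + 1)) := by
  have hint : IntegrableOn (fun x : ℝ => x ^ r) (Ioo 0 s) := by
    rw [← intervalIntegrable_iff_integrableOn_Ioo_of_le hs.le]
    exact intervalIntegral.intervalIntegrable_rpow' hr
  rw [← ofReal_integral_eq_lintegral_ofReal hint, ← integral_Ioc_eq_integral_Ioo,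
    ← intervalIntegral.integral_of_le hs.le, integral_rpow (.inl hr),
    Real.zero_rpow (by linarith), sub_zero]
  filter_upwards [ae_restrict_mem measurableSet_Ioo] with x hx
  exact Real.rpow_nonneg hx.1.le r

theorem lintegral_Ioi_rpow_s2 {s r : ℝ} (hs : 0 < s) (hr : r < -1) :
    ∫⁻ x in Ioi s, ENNReal.ofReal (x ^ r) = ENNReal.ofReal (-s ^ (r + 1) / (r + 1)) := by
  rw [← ofReal_integral_eq_lintegral_ofReal (integrableOn_Ioi_rpow_of_lt hr hs),
    integral_Ioi_rpow_of_lt hr hs]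
  filter_upwards [ae_restrict_mem measurableSet_Ioi] with x hx
  exact Real.rpow_nonneg (hs.trans hx).le r

theorem lintegral_pi_prod_kernel_mul_le {α : Type*} [MeasurableSpace α] (ν : Measure α)
    [SigmaFinite ν] {K : α → α → ℝ≥0∞} (hK : Measurable (uncurry K)) {h : α → ℝ≥0∞}
    (hh : Measurable h) {C : ℝ≥0∞} (hKh : ∀ᵐ s ∂ν, ∫⁻ x, K s x * h x ∂ν ≤ C * h s) (n : ℕ) :
    ∫⁻ t, (∏ k : Fin n, K (t k.castSucc) (t k.succ)) * h (t (Fin.last n))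
        ∂Measure.pi (fun _ => ν) ≤ C ^ n * ∫⁻ x, h x ∂ν := by
  induction n with
  | zero =>
    simpa using ((measurePreserving_piUnique fun _ : Fin 1 => ν).lintegral_comp hh).le
  | succ n ih =>
    set A : (Fin (n + 1) → α) → ℝ≥0∞ := fun s => ∏ k : Fin n, K (s k.castSucc) (s k.succ)
    have hA : Measurable A := Finset.measurable_prod _ fun k _ =>
      hK.comp (f := fun s : Fin (n + 1) → α => (s k.castSucc, s k.succ)) (by fun_prop)
    have hsplit := measurePreserving_piFinSuccAbove (fun _ : Fin (n + 2) => ν) (Fin.last _)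
    calc _ = ∫⁻ p : α × (Fin (n + 1) → α), A p.2 * (K (p.2 (Fin.last n)) p.1 * h p.1)
          ∂ν.prod (Measure.pi fun _ => ν) := by
          rw [← hsplit.symm.lintegral_comp_emb (MeasurableEquiv.measurableEmbedding _)]
          congr 1 with p
          simp only [MeasurableEquiv.piFinSuccAbove_symm_apply, Fin.insertNthEquiv_last,
            Fin.snocEquiv_apply, Fin.prod_univ_castSucc, Fin.succ_last, Fin.snoc_last, mul_assoc, A,
            Fin.succ_castSucc, Fin.snoc_castSucc]
      _ = ∫⁻ s, A s * ∫⁻ x, K (s (Fin.last n)) x * h x ∂ν ∂Measure.pi fun _ => ν := by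
          rw [lintegral_prod_symm _ (by fun_prop)]
          exact lintegral_congr fun s => lintegral_const_mul (A s) (hK.of_uncurry_left.mul hh)
      _ ≤ ∫⁻ s, C * (A s * h (s (Fin.last n))) ∂Measure.pi fun _ => ν := by
          refine lintegral_mono_ae ?_
          filter_upwards [(Measure.tendsto_eval_ae_ae (i := Fin.last n)).eventually hKh] with s hs
          exact (mul_le_mul_right hs _).trans_eq (mul_left_comm _ _ _)
      _ ≤ C ^ (n + 1) * ∫⁻ x, h x ∂ν := by
          rw [lintegral_const_mul _ ?_, pow_succ', mul_assoc]
          · gcongr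
          · exact hA.mul (hh.comp (measurable_pi_apply _))

/-- The `k`-th factor of the integrand, with `s = t_{k-1}` and `x = t_k`. -/
noncomputable def quickPathKernel (γ s x : ℝ) : ℝ :=
  (if x < s then 1 / (s ^ (1 - γ) * x ^ γ) else 0) + (if s < x then 1 / x else 0)

theorem measurable_quickPathKernel (γ : ℝ) : Measurable (uncurry (quickPathKernel γ)) := by
  unfold quickPathKernel
  refine Measurable.add ?_ ?_ <;> refine Measurable.ite ?_ (by fun_prop) measurable_const
  · exact measurableSet_lt measurable_snd measurable_fst
  · exact measurableSet_lt measurable_fst measurable_snd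

theorem quickPathKernel_mul_rpow_of_lt {γ α s x : ℝ} (hx : 0 < x) (hxs : x < s) :
    quickPathKernel γ s x * x ^ (-α) = s ^ (γ - 1) * x ^ (-(γ + α)) := by
  have hs : 0 < s := hx.trans hxs
  rw [quickPathKernel, if_pos hxs, if_neg hxs.not_gt, add_zero, show γ - 1 = -(1 - γ) by ring,
    Real.rpow_neg hs.le, Real.rpow_neg hx.le, Real.rpow_neg hx.le, Real.rpow_add hx]
  field_simp

theorem quickPathKernel_mul_rpow_of_gt {γ α s x : ℝ} (hs : 0 < s) (hsx : s < x) :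
    quickPathKernel γ s x * x ^ (-α) = x ^ (-α - 1) := by
  rw [quickPathKernel, if_neg hsx.not_gt, if_pos hsx, zero_add, Real.rpow_sub (hs.trans hsx),
    Real.rpow_one, one_div_mul_eq_div]

theorem lintegral_Ioi_quickPathKernel_mul_rpow {γ α s : ℝ} (hs : 0 < s) (hα : 0 < α)
    (hγα : γ + α < 1) :
    ∫⁻ x in Ioi 0, ENNReal.ofReal (quickPathKernel γ s x) * ENNReal.ofReal (x ^ (-α)) =
      ENNReal.ofReal ((1 / (1 - γ - α) + 1 / α) * s ^ (-α)) := by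
  have below : ∫⁻ x in Ioc 0 s, ENNReal.ofReal (quickPathKernel γ s x) * ENNReal.ofReal (x ^ (-α))
      = ENNReal.ofReal (s ^ (-α) / (1 - γ - α)) := by
    rw [← setLIntegral_congr Ioo_ae_eq_Ioc]
    calc _ = ∫⁻ x in Ioo 0 s, ENNReal.ofReal (s ^ (γ - 1)) * ENNReal.ofReal (x ^ (-(γ + α))) := by
          refine setLIntegral_congr_fun measurableSet_Ioo fun x hx => ?_
          rw [← ENNReal.ofReal_mul' (Real.rpow_nonneg hx.1.le _),
            quickPathKernel_mul_rpow_of_lt hx.1 hx.2, ENNReal.ofReal_mul (by positivity)]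
      _ = _ := by
          rw [lintegral_const_mul _ (by fun_prop), lintegral_Ioo_zero_rpow hs (by linarith),
            ← ENNReal.ofReal_mul (by positivity), mul_div_assoc', ← Real.rpow_add hs,
            show γ - 1 + (-(γ + α) + 1) = -α by ring, show -(γ + α) + 1 = 1 - γ - α by ring]
  have above : ∫⁻ x in Ioi s, ENNReal.ofReal (quickPathKernel γ s x) * ENNReal.ofReal (x ^ (-α))
      = ENNReal.ofReal (s ^ (-α) / α) := by
    calc _ = ∫⁻ x in Ioi s, ENNReal.ofReal (x ^ (-α - 1)) := by
          refine setLIntegral_congr_fun measurableSet_Ioi fun x hx => ?_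
          rw [← ENNReal.ofReal_mul' (Real.rpow_nonneg (hs.trans hx).le _),
            quickPathKernel_mul_rpow_of_gt hs hx]
      _ = _ := by
          rw [lintegral_Ioi_rpow_s2 hs (by linarith)]
          congr 1
          rw [sub_add_cancel, neg_div_neg_eq]
  rw [← Ioc_union_Ioi_eq_Ioi hs.le, lintegral_union measurableSet_Ioi Ioc_disjoint_Ioi_same,
    below, above,
    ← ENNReal.ofReal_add (div_nonneg (by positivity) (by linarith)) (by positivity)]
  congr 1
  ring

theorem lintegral_pi_quickPathKernel_le {γ α : ℝ} (hα : 0 < α) (hα1 : α < 1) (hγα : γ + α < 1)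
    (n : ℕ) :
    ∫⁻ t, ∏ k : Fin n, ENNReal.ofReal (quickPathKernel γ (t k.castSucc) (t k.succ))
        ∂Measure.pi (fun _ => volume.restrict (Ioc (0 : ℝ) 1)) ≤
      ENNReal.ofReal (1 / (1 - γ - α) + 1 / α) ^ n * ENNReal.ofReal (1 / (1 - α)) := by
  set ν := volume.restrict (Ioc (0 : ℝ) 1)
  set h : ℝ → ℝ≥0∞ := fun x => ENNReal.ofReal (x ^ (-α))
  have hKh : ∀ᵐ s ∂ν, ∫⁻ x, ENNReal.ofReal (quickPathKernel γ s x) * h x ∂ν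
      ≤ ENNReal.ofReal (1 / (1 - γ - α) + 1 / α) * h s := by
    filter_upwards [ae_restrict_mem measurableSet_Ioc] with s hs
    have hc : 0 ≤ 1 / (1 - γ - α) + 1 / α := by
      have : 0 < 1 - γ - α := by linarith
      positivity
    rw [← ENNReal.ofReal_mul hc, ← lintegral_Ioi_quickPathKernel_mul_rpow hs.1 hα hγα]
    exact lintegral_mono_set Ioc_subset_Ioi_self
  have hh_one : ∀ᵐ x ∂ν, 1 ≤ h x := by
    filter_upwards [ae_restrict_mem measurableSet_Ioc] with x hx
    exact ENNReal.one_le_ofReal.mpr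
      (Real.one_le_rpow_of_pos_of_le_one_of_nonpos hx.1 hx.2 (by linarith))
  have hh_int : ∫⁻ x, h x ∂ν = ENNReal.ofReal (1 / (1 - α)) := by
    rw [← setLIntegral_congr Ioo_ae_eq_Ioc, lintegral_Ioo_zero_rpow one_pos (by linarith),
      Real.one_rpow, neg_add_eq_sub]
  calc _ ≤ ∫⁻ t, (∏ k : Fin n, ENNReal.ofReal (quickPathKernel γ (t k.castSucc) (t k.succ)))
          * h (t (Fin.last n)) ∂Measure.pi fun _ => ν := by
        refine lintegral_mono_ae ?_
        filter_upwards [(Measure.tendsto_eval_ae_ae (i := Fin.last n)).eventually hh_one] with t ht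
        exact le_mul_of_one_le_right' ht
    _ ≤ _ := by
        rw [← hh_int]
        exact lintegral_pi_prod_kernel_mul_le ν
          (K := fun s x => ENNReal.ofReal (quickPathKernel γ s x))
          (measurable_quickPathKernel γ).ennreal_ofReal (by fun_prop) hKh n

/-- Lemma 6.5: time integral bound for traces of quick paths. -/
theorem stmt_2 (γ : ℝ) (hγ0 : 0 < γ) (hγ1 : γ < 1) :
    ∃ C''' : ℝ, 0 < C''' ∧ ∀ n : ℕ, 1 ≤ n →
      (∫⁻ t in Set.univ.pi (fun _ : Fin (n+1) => Set.Ioc (0:ℝ) 1),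
        ∏ k : Fin n, ENNReal.ofReal
          ((if t k.succ < t k.castSucc then
              1 / ((t k.castSucc) ^ (1-γ) * (t k.succ) ^ γ) else 0) +
           (if t k.castSucc < t k.succ then 1 / (t k.succ) else 0))) ≤
      ENNReal.ofReal (C''' ^ n) := by
  set α := (1 - γ) / 2 with hα_def
  have hα : 0 < α := by linarith
  have hα1 : α < 1 := by linarith
  set c := 1 / (1 - γ - α) + 1 / α
  set m := 1 / (1 - α)
  have hc : 0 < c := add_pos (one_div_pos.mpr (by linarith)) (one_div_pos.mpr hα)
  have hm : 1 ≤ m := by rw [le_div_iff₀ (by linarith)]; linarith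
  refine ⟨c * m, by positivity, fun n hn => ?_⟩
  rw [volume_pi, Measure.restrict_pi_pi]
  calc _ ≤ ENNReal.ofReal c ^ n * ENNReal.ofReal m :=
        lintegral_pi_quickPathKernel_le hα hα1 (by linarith) n
    _ ≤ ENNReal.ofReal ((c * m) ^ n) := by
        rw [← ENNReal.ofReal_pow hc.le, ← ENNReal.ofReal_mul (by positivity), mul_pow]
        gcongr
        exact le_self_pow₀ hm (by omega)
end

section
/- Let γ > 0 and let (X_r)_{r > 1} be a family of almost surely positive random variables such that log X_r / (γ log r) converges to 1 in probability as r → ∞. Then there exists a function g : (0,∞) → (0,∞) with g(r)/r^l → 0 as r → ∞ for every l > 0, such that P(X_r ≤ r^γ / g(r)) → 0 as r → ∞. -/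
open MeasureTheory Filter Topology

/-! The function `g` is `r ↦ r ^ (2γ δ(r))` for a tolerance `δ(r) → 0⁺` that tends to zero slowly
enough that the deviation probabilities at level `δ(r)` still vanish; such a `δ` exists by a
diagonal argument over the tolerances `1/(n+1)`. Since `δ(r) → 0`, `g` grows slower than every
power of `r`, and `X_r ≤ r^γ / g(r) = r^(γ(1 - 2δ(r)))` forces `log X_r / (γ log r)` to deviate
from `1` by more than `δ(r)`. -/

theorem exists_nat_tendsto_atTop_and_tendsto_diag {α : Type*} {l : Filter α}
    [l.IsCountablyGenerated] {u : ℕ → ℝ → α} (hu : ∀ n, Tendsto (u n) atTop l) :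
    ∃ N : ℝ → ℕ, Tendsto N atTop atTop ∧ Tendsto (fun r => u (N r) r) atTop l := by
  classical
  obtain ⟨s, hs⟩ := l.exists_antitone_basis
  have hR : ∀ n, ∃ R : ℝ, ∀ r ≥ R, u n r ∈ s n ∧ (n : ℝ) ≤ r := fun n =>
    eventually_atTop.1 (((hu n).eventually (hs.mem n)).and (eventually_ge_atTop _))
  choose R hR using hR
  -- `N r` is the largest index whose threshold `R n` has been passed by `r`.
  set N : ℝ → ℕ := fun r => Nat.findGreatest (fun n => R n ≤ r) ⌊r⌋₊
  have le_N : ∀ n r, R n ≤ r → n ≤ N r := fun n r hr =>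
    Nat.le_findGreatest (Nat.le_floor (hR n r hr).2) hr
  have R_N_le : ∀ r, R 0 ≤ r → R (N r) ≤ r := fun r hr =>
    Nat.findGreatest_spec (P := fun n => R n ≤ r) (Nat.zero_le _) hr
  refine ⟨N, tendsto_atTop.2 fun n => eventually_atTop.2 ⟨R n, le_N n⟩,
    hs.tendsto_right_iff.2 fun k _ => ?_⟩
  filter_upwards [eventually_ge_atTop (R 0), eventually_ge_atTop (R k)] with r h0 hk
  exact hs.antitone (le_N k r hk) (hR _ _ (R_N_le r h0)).1

theorem exists_tendsto_nhdsGT_zero_and_tendsto_diag {α : Type*} {l : Filter α}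
    [l.IsCountablyGenerated] {f : ℝ → ℝ → α} (hf : ∀ ε > 0, Tendsto (f ε) atTop l) :
    ∃ δ : ℝ → ℝ, Tendsto δ atTop (𝓝[>] 0) ∧ Tendsto (fun r => f (δ r) r) atTop l := by
  obtain ⟨N, hN, hdiag⟩ := exists_nat_tendsto_atTop_and_tendsto_diag
    (u := fun n => f (1 / ((n : ℝ) + 1))) fun n => hf _ Nat.one_div_pos_of_nat
  exact ⟨fun r => 1 / ((N r : ℝ) + 1), tendsto_nhdsWithin_iff.2
    ⟨tendsto_one_div_add_atTop_nhds_zero_nat.comp hN,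
      Eventually.of_forall fun _ => Set.mem_Ioi.2 Nat.one_div_pos_of_nat⟩, hdiag⟩

theorem tendsto_rpow_div_rpow_atTop_zero {e : ℝ → ℝ} (he : Tendsto e atTop (𝓝 0)) {l : ℝ}
    (hl : 0 < l) : Tendsto (fun r => r ^ e r / r ^ l) atTop (𝓝 0) := by
  have hexp : Tendsto (fun r => Real.log r * (e r - l)) atTop atBot :=
    Real.tendsto_log_atTop.atTop_mul_neg (neg_lt_zero.2 hl) (by simpa using he.sub_const l)
  refine (Real.tendsto_exp_atBot.comp hexp).congr' ?_
  filter_upwards [eventually_gt_atTop 0] with r hr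
  rw [Function.comp_apply, ← Real.rpow_def_of_pos hr, Real.rpow_sub hr]

theorem lt_abs_log_div_sub_one_of_le_rpow {x r γ δ : ℝ} (hx : 0 < x) (hr : 1 < r)
    (hγ : 0 < γ) (hδ : 0 < δ) (h : x ≤ r ^ γ / r ^ (2 * γ * δ)) :
    δ < |Real.log x / (γ * Real.log r) - 1| := by
  have hr0 : 0 < r := zero_lt_one.trans hr
  have hγlog : 0 < γ * Real.log r := mul_pos hγ (Real.log_pos hr)
  have hlog : Real.log x ≤ (1 - 2 * δ) * (γ * Real.log r) := by
    rw [← Real.rpow_sub hr0] at h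
    calc Real.log x ≤ Real.log (r ^ (γ - 2 * γ * δ)) := Real.log_le_log hx h
      _ = (1 - 2 * δ) * (γ * Real.log r) := by rw [Real.log_rpow hr0]; ring
  have hratio : Real.log x / (γ * Real.log r) ≤ 1 - 2 * δ := (div_le_iff₀ hγlog).2 hlog
  linarith [neg_le_abs (Real.log x / (γ * Real.log r) - 1)]

theorem stmt_12_general {Ω : Type*} [MeasurableSpace Ω] (μ : Measure Ω)
    (γ : ℝ) (hγ : 0 < γ) (X : ℝ → Ω → ℝ)
    (hXpos : ∀ r, 1 < r → ∀ᵐ ω ∂μ, 0 < X r ω)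
    (hconv : ∀ ε : ℝ, 0 < ε →
      Tendsto (fun r => μ {ω | ε < |Real.log (X r ω) / (γ * Real.log r) - 1|})
        atTop (nhds 0)) :
    ∃ g : ℝ → ℝ, (∀ r, 0 < r → 0 < g r) ∧
      (∀ l : ℝ, 0 < l → Tendsto (fun r => g r / r ^ l) atTop (nhds (0:ℝ))) ∧
      Tendsto (fun r => μ {ω | X r ω ≤ r ^ γ / g r}) atTop (nhds 0) := by
  obtain ⟨δ, hδ, hdiag⟩ := exists_tendsto_nhdsGT_zero_and_tendsto_diag hconv
  refine ⟨fun r => r ^ (2 * γ * δ r), fun r hr => Real.rpow_pos_of_pos hr _,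
    fun l hl => tendsto_rpow_div_rpow_atTop_zero
      (by simpa using (tendsto_nhdsWithin_iff.1 hδ).1.const_mul (2 * γ)) hl, ?_⟩
  have hbound : ∀ᶠ r in atTop, μ {ω | X r ω ≤ r ^ γ / r ^ (2 * γ * δ r)} ≤
      μ {ω | δ r < |Real.log (X r ω) / (γ * Real.log r) - 1|} := by
    filter_upwards [eventually_gt_atTop 1, (tendsto_nhdsWithin_iff.1 hδ).2] with r hr hδr
    refine measure_mono_ae ?_
    filter_upwards [hXpos r hr] with ω hω hle
    exact lt_abs_log_div_sub_one_of_le_rpow hω hr hγ hδr hle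
  exact tendsto_of_tendsto_of_tendsto_of_le_of_le' tendsto_const_nhds hdiag
    (Eventually.of_forall fun _ => zero_le) hbound

/-- Abstract content of Lemma 7.4. -/
theorem stmt_12 {Ω : Type*} [MeasurableSpace Ω] (μ : Measure Ω) [IsProbabilityMeasure μ]
    (γ : ℝ) (hγ : 0 < γ) (X : ℝ → Ω → ℝ) (hXmeas : ∀ r, Measurable (X r))
    (hXpos : ∀ r, 1 < r → ∀ᵐ ω ∂μ, 0 < X r ω)
    (hconv : ∀ ε : ℝ, 0 < ε →
      Tendsto (fun r => μ {ω | ε < |Real.log (X r ω) / (γ * Real.log r) - 1|})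
        atTop (nhds 0)) :
    ∃ g : ℝ → ℝ, (∀ r, 0 < r → 0 < g r) ∧
      (∀ l : ℝ, 0 < l → Tendsto (fun r => g r / r ^ l) atTop (nhds (0:ℝ))) ∧
      Tendsto (fun r => μ {ω | X r ω ≤ r ^ γ / g r}) atTop (nhds 0) :=
  stmt_12_general μ γ hγ X hXpos hconv
end
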